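/- arXiv:2011.09118 — 2 statements merged into one kernel-verified Lean document; each statement's English description precedes it below -/
import Mathlib

section
/- Let n ≥ 4 and g ∈ G₁. Then there exist ξ ∈ {0, 1}, h ∈ H' and k ∈ O(n−1,1) such that h g k equals the matrix obtained from the identity matrix Iₙ by setting its (n−1, 1)-entry to ξ and its (n, 1)-entry to −1. -/
open Matrix

noncomputable section

/-- The Lie bracket of `𝔥₃ ⊕ ℝ^{n-3}` on `ℝⁿ`: `[x, y] = (x₁y₂ - x₂y₁) • eₙ`. -/
def bral (n : ℕ) (hn : 4 ≤ n) (x y : Fin n → ℝ) : Fin n → ℝ :=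
  (x ⟨0, by omega⟩ * y ⟨1, by omega⟩ - x ⟨1, by omega⟩ * y ⟨0, by omega⟩) •
    (Pi.single (⟨n - 1, by omega⟩ : Fin n) (1 : ℝ) : Fin n → ℝ)

/-- The matrix `I_{n-1,1} = diag(1, …, 1, -1)`. -/
def Inm (n : ℕ) : Matrix (Fin n) (Fin n) ℝ :=
  Matrix.diagonal fun i => if (i : ℕ) < n - 1 then 1 else -1

/-- `ε_i = 1` for `i ≤ n-1` (1-based), `ε_n = -1`. -/
def eps (n : ℕ) (i : Fin n) : ℝ := if (i : ℕ) < n - 1 then 1 else -1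

/-- The canonical inner product of signature `(n-1,1)`: `⟨x,y⟩₀ = xᵀ I_{n-1,1} y`. -/
def ip0 (n : ℕ) (x y : Fin n → ℝ) : ℝ := ∑ i : Fin n, eps n i * x i * y i

/-- The indefinite orthogonal group `O(n-1,1)`. -/
def Oset (n : ℕ) : Set (Matrix (Fin n) (Fin n) ℝ) := {k | kᵀ * Inm n * k = Inm n}

/-- The group `ℝ^× · Aut(𝔥₃ ⊕ ℝ^{n-3})`: invertible block lower triangular matrices
with diagonal blocks of sizes `(2, n-3, 1)`. -/
def Hset (n : ℕ) : Set (Matrix (Fin n) (Fin n) ℝ) :=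
  {A | IsUnit A.det ∧ ∀ i j : Fin n,
    ((i : ℕ) < 2 ∧ 2 ≤ (j : ℕ)) ∨ ((i : ℕ) < n - 1 ∧ (j : ℕ) = n - 1) → A i j = 0}

/-- `H' = {hᵀ : h ∈ H}`. -/
def Hset' (n : ℕ) : Set (Matrix (Fin n) (Fin n) ℝ) := {A | Aᵀ ∈ Hset n}

/-- `G_λ`: invertible matrices with last column `eₙ` and last row `(-λ, 0, …, 0, 1)`. -/
def Glam (n : ℕ) (hn : 4 ≤ n) (lam : ℝ) : Set (Matrix (Fin n) (Fin n) ℝ) :=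
  {g | IsUnit g.det ∧
    (∀ i : Fin n, g i ⟨n - 1, by omega⟩ = if (i : ℕ) = n - 1 then 1 else 0) ∧
    (∀ j : Fin n, g ⟨n - 1, by omega⟩ j =
      if (j : ℕ) = n - 1 then 1 else if (j : ℕ) = 0 then -lam else 0)}

/-- The matrix `g_{λ,ξ}`: the identity except that the `(1, n-1)` entry is `ξ` and
the `(1, n)` entry is `λ`. -/
def gmat (n : ℕ) (hn : 4 ≤ n) (lam xi : ℝ) : Matrix (Fin n) (Fin n) ℝ :=
  1 + Matrix.single ⟨0, by omega⟩ ⟨n - 2, by omega⟩ xi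
    + Matrix.single ⟨0, by omega⟩ ⟨n - 1, by omega⟩ lam

/-- The inner product `⟨x,y⟩_{λ,ξ} = ⟨g_{λ,ξ}⁻¹x, g_{λ,ξ}⁻¹y⟩₀`. -/
def ipg (n : ℕ) (hn : 4 ≤ n) (lam xi : ℝ) (x y : Fin n → ℝ) : ℝ :=
  ip0 n ((gmat n hn lam xi)⁻¹.mulVec x) ((gmat n hn lam xi)⁻¹.mulVec y)

/-- `x'_i = g_{λ,ξ} e_i`. -/
def xvec (n : ℕ) (hn : 4 ≤ n) (lam xi : ℝ) (i : Fin n) : Fin n → ℝ :=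
  (gmat n hn lam xi).mulVec (Pi.single i 1)

/-- The parameter set `Λ = {(0,0), (1,0), (1,1), (2,0), (2,√3), (2,2)}`. -/
def Lam : Set (ℝ × ℝ) :=
  {(0, 0), (1, 0), (1, 1), (2, 0), (2, Real.sqrt 3), (2, 2)}

/-!
Write `⟨x, y⟩ = xᵀ I_{n-1,1} y` and `v = e₁ + eₙ`, an isotropic vector (indices are 1-based here,
while `Fin n` is 0-based). The last row of `g ∈ G₁` is the functional `-⟨v, ·⟩`, so `p₁ = g⁻¹e₁`
and `p₂ = g⁻¹e₂` lie in `v^⊥`, on which the form is positive semidefinite with radical `ℝ v`.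
Reflections and one null rotation, all fixing `v`, give `k' ∈ O(n-1,1)` sending `p₁, p₂` into
`span {v - ξ e_{n-1}, e₂}`, with `ξ = 0` when the plane `span {p₁, p₂}` contains `v` and `ξ = 1`
when it is positive definite. The target matrix `T` maps `v - ξ e_{n-1}` to `e₁`, fixes `e₂`, and
also has last row `-⟨v, ·⟩`. Hence `h = T k' g⁻¹` maps `e₁, e₂` into `span {e₁, e₂}` and has last
row `-⟨v, k' g⁻¹ ·⟩ = -⟨v, g⁻¹ ·⟩ = eₙᵀ`, so `h ∈ H'` and `h g k'⁻¹ = T`.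
-/

namespace LinearMap.BilinForm

variable {K V : Type*} [Field K] [AddCommGroup V] [Module K V] {B : LinearMap.BilinForm K V}

lemma two_div_smul_apply_self {v : V} (hv : B v v ≠ 0) : ((2 / B v v) • B v) v = 2 := by
  simp [hv]

def reflectionIsometry (hB : B.IsSymm) {v : V} (hv : B v v ≠ 0) : B →bᵢ B where
  toLinearMap := Module.reflection (two_div_smul_apply_self hv)
  map_app' x y := by
    change B (Module.reflection _ x) (Module.reflection _ y) = B x y
    simp only [Module.reflection_apply, LinearMap.smul_apply, smul_eq_mul, map_sub, map_smul,
      LinearMap.sub_apply, hB.eq x v]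
    field_simp
    ring

lemma reflectionIsometry_apply (hB : B.IsSymm) {v : V} (hv : B v v ≠ 0) (x : V) :
    reflectionIsometry hB hv x = x - (2 / B v v * B v x) • v := by
  change Module.reflection (two_div_smul_apply_self hv) x = _
  rw [Module.reflection_apply, LinearMap.smul_apply, smul_eq_mul]

lemma reflectionIsometry_apply_of_orthogonal (hB : B.IsSymm) {v x : V} (hv : B v v ≠ 0)
    (hx : B v x = 0) : reflectionIsometry hB hv x = x := by
  simp [reflectionIsometry_apply, hx]

lemma reflectionIsometry_sub_apply (hB : B.IsSymm) {x y : V} (hxy : B x x = B y y)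
    (h : B (x - y) (x - y) ≠ 0) : reflectionIsometry hB h x = y := by
  have hsq : B (x - y) (x - y) = 2 * B (x - y) x := by
    simp only [map_sub, LinearMap.sub_apply, hB.eq y x, hxy]; ring
  have hx : B (x - y) x ≠ 0 := fun h0 => h (by rw [hsq, h0, mul_zero])
  have h2 : (2 : K) ≠ 0 := fun h2 => h (by rw [hsq, h2, zero_mul])
  rw [reflectionIsometry_apply, hsq,
    show 2 / (2 * B (x - y) x) * B (x - y) x = 1 by field_simp, one_smul, sub_sub_cancel]

lemma exists_isometry_apply_eq [NeZero (2 : K)] (hB : B.IsSymm) {x y : V}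
    (hxy : B x x = B y y) (hx : B x x ≠ 0) :
    ∃ f : B →bᵢ B, f x = y ∧ ∀ z, B x z = 0 → B y z = 0 → f z = z := by
  by_cases h : B (x - y) (x - y) = 0
  · have hy : B y y ≠ 0 := hxy ▸ hx
    -- `x - y` and `x + y` cannot both be isotropic, so reflect in `x + y` and then in `y`
    have h' : B (x - -y) (x - -y) ≠ 0 := by
      have : B (x - -y) (x - -y) + B (x - y) (x - y) = 2 * 2 * B x x := by
        simp only [sub_neg_eq_add, map_add, map_sub, LinearMap.add_apply, LinearMap.sub_apply,
          hB.eq y x, ← hxy]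
        ring
      rw [h, add_zero] at this
      rw [this]
      exact mul_ne_zero (mul_ne_zero two_ne_zero two_ne_zero) hx
    refine ⟨(reflectionIsometry hB hy).comp (reflectionIsometry hB h'), ?_, fun z hxz hyz => ?_⟩
    · rw [Isometry.comp_apply, reflectionIsometry_sub_apply hB (by simpa using hxy) h',
        reflectionIsometry_apply, map_neg, mul_neg, div_mul_cancel₀ _ hy]
      module
    · rw [Isometry.comp_apply, reflectionIsometry_apply_of_orthogonal hB h' (by simp [hxz, hyz]),
        reflectionIsometry_apply_of_orthogonal hB hy hyz]
  · exact ⟨reflectionIsometry hB h, reflectionIsometry_sub_apply hB hxy h, fun z hxz hyz =>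
      reflectionIsometry_apply_of_orthogonal hB h (by simp [hxz, hyz])⟩

lemma exists_isometry_apply_eq_pair [NeZero (2 : K)] (hB : B.IsSymm) {x₁ x₂ y₁ y₂ : V}
    (h₁ : B x₁ x₁ = B y₁ y₁) (h₂ : B x₂ x₂ = B y₂ y₂) (hx₁ : B x₁ x₁ ≠ 0) (hx₂ : B x₂ x₂ ≠ 0)
    (hx : B x₁ x₂ = 0) (hy : B y₁ y₂ = 0) :
    ∃ f : B →bᵢ B, f x₁ = y₁ ∧ f x₂ = y₂ ∧
      ∀ z, B x₁ z = 0 → B x₂ z = 0 → B y₁ z = 0 → B y₂ z = 0 → f z = z := by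
  obtain ⟨f₁, hfx₁, hf₁⟩ := exists_isometry_apply_eq hB h₁ hx₁
  have h₂' : B (f₁ x₂) (f₁ x₂) = B y₂ y₂ := by rw [Isometry.map_app, h₂]
  obtain ⟨f₂, hfx₂, hf₂⟩ := exists_isometry_apply_eq hB h₂' (by rwa [Isometry.map_app])
  have hy₁ : f₂ y₁ = y₁ :=
    hf₂ y₁ (by rw [← hfx₁, Isometry.map_app, hB.eq, hx]) (by rw [hB.eq, hy])
  refine ⟨f₂.comp f₁, by simp [hfx₁, hy₁], by simp [hfx₂], fun z hz₁ hz₂ hz₃ hz₄ => ?_⟩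
  rw [Isometry.comp_apply, hf₁ z hz₁ hz₃,
    hf₂ z (by rw [← hf₁ z hz₁ hz₃, Isometry.map_app, hz₂]) hz₄]

def nullRotation [NeZero (2 : K)] (hB : B.IsSymm) {v c : V} (hv : B v v = 0) (hc : B v c = 0) :
    B →bᵢ B where
  toLinearMap := LinearMap.id + (B c).smulRight v - (B v).smulRight c
    - (B c c / 2) • (B v).smulRight v
  map_app' x y := by
    simp only [AddHom.toFun_eq_coe, LinearMap.coe_toAddHom, LinearMap.sub_apply,
      LinearMap.add_apply, LinearMap.smul_apply, LinearMap.id_apply, LinearMap.smulRight_apply,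
      map_sub, map_add, map_smul, smul_eq_mul, hB.eq x v, hB.eq x c, hB.eq c v, hv, hc]
    field_simp
    ring

lemma nullRotation_apply_of_orthogonal [NeZero (2 : K)] (hB : B.IsSymm) {v c x : V}
    (hv : B v v = 0) (hc : B v c = 0) (hx : B v x = 0) :
    nullRotation hB hv hc x = x + B c x • v := by
  change (nullRotation hB hv hc).toLinearMap x = _
  simp only [nullRotation, LinearMap.sub_apply, LinearMap.add_apply, LinearMap.smul_apply,
    LinearMap.id_apply, LinearMap.smulRight_apply, hx, zero_smul, smul_zero, sub_zero]

end LinearMap.BilinForm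

open LinearMap.BilinForm Submodule

section NullFrame

variable {V : Type*} [AddCommGroup V] [Module ℝ V]

lemma LinearMap.BilinForm.apply_sqrt_smul_sqrt_smul {B : LinearMap.BilinForm ℝ V} {u : V}
    (hu : B u u = 1) {a : ℝ} (ha : 0 ≤ a) : B (√a • u) (√a • u) = a := by
  simp [hu, Real.mul_self_sqrt ha]

structure IsNullFrame (B : LinearMap.BilinForm ℝ V) (v u₁ u₂ : V) : Prop where
  isSymm : B.IsSymm
  v_v : B v v = 0
  pos_of_orthogonal : ∀ x, B v x = 0 → x ∉ ℝ ∙ v → 0 < B x x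
  u₁_u₁ : B u₁ u₁ = 1
  u₂_u₂ : B u₂ u₂ = 1
  u₁_u₂ : B u₁ u₂ = 0
  v_u₁ : B v u₁ = 0
  v_u₂ : B v u₂ = 0

namespace IsNullFrame

variable {B : LinearMap.BilinForm ℝ V} {v u₁ u₂ : V}

lemma exists_isometry_apply_eq_smul_u₁ (F : IsNullFrame B v u₁ u₂) {p : V} (hvp : B v p = 0)
    (hp : 0 < B p p) : ∃ f : B →bᵢ B, f v = v ∧ f p = √(B p p) • u₁ := by
  obtain ⟨f, hfp, hf⟩ :=
    exists_isometry_apply_eq F.isSymm (apply_sqrt_smul_sqrt_smul F.u₁_u₁ hp.le).symm hp.ne'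
  refine ⟨f, hf v ?_ ?_, hfp⟩
  · rw [F.isSymm.eq, hvp]
  · simp [F.isSymm.eq _ v, F.v_u₁]

lemma exists_isometry_apply_eq_smul_u₂_u₁ (F : IsNullFrame B v u₁ u₂) {p q : V} (hvp : B v p = 0)
    (hvq : B v q = 0) (hp : 0 < B p p) (hq : 0 < B q q) (hpq : B p q = 0) :
    ∃ f : B →bᵢ B, f v = v ∧ f p = √(B p p) • u₂ ∧ f q = √(B q q) • u₁ := by
  obtain ⟨f, hfp, hfq, hf⟩ := exists_isometry_apply_eq_pair F.isSymm
    (apply_sqrt_smul_sqrt_smul F.u₂_u₂ hp.le).symm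
    (apply_sqrt_smul_sqrt_smul F.u₁_u₁ hq.le).symm hp.ne' hq.ne' hpq
    (by simp [F.isSymm.eq u₂, F.u₁_u₂])
  refine ⟨f, hf v ?_ ?_ ?_ ?_, hfp, hfq⟩
  · rw [F.isSymm.eq, hvp]
  · rw [F.isSymm.eq, hvq]
  · simp [F.isSymm.eq _ v, F.v_u₂]
  · simp [F.isSymm.eq _ v, F.v_u₁]

lemma exists_isometry_mem_span_of_notMem (F : IsNullFrame B v u₁ u₂) {p₀ p₁ : V}
    (hp₀ : B v p₀ = 0) (hp₁ : B v p₁ = 0) (h₀ : p₀ ∉ ℝ ∙ v) :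
    ∃ ξ : ℝ, (ξ = 0 ∨ ξ = 1) ∧ ∃ f : B →bᵢ B, f v = v ∧
      f p₀ ∈ span ℝ {v - ξ • u₂, u₁} ∧ f p₁ ∈ span ℝ {v - ξ • u₂, u₁} := by
  have ha := F.pos_of_orthogonal p₀ hp₀ h₀
  -- Gram–Schmidt: `q` is the part of `p₁` orthogonal to `p₀`
  set q := p₁ - (B p₀ p₁ / B p₀ p₀) • p₀
  have hvq : B v q = 0 := by simp [q, hp₀, hp₁]
  have hp₀q : B p₀ q = 0 := by
    simp only [q, map_sub, map_smul, smul_eq_mul]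
    field_simp
    ring
  have hp₁q : p₁ = q + (B p₀ p₁ / B p₀ p₀) • p₀ := by simp [q]
  by_cases hq : q ∈ ℝ ∙ v
  · obtain ⟨f, hfv, hfp₀⟩ := F.exists_isometry_apply_eq_smul_u₁ hp₀ ha
    obtain ⟨c, hc⟩ := mem_span_singleton.mp hq
    have hu₁ : u₁ ∈ span ℝ {v - (0 : ℝ) • u₂, u₁} := subset_span (by simp)
    have hv : v ∈ span ℝ {v - (0 : ℝ) • u₂, u₁} := subset_span (by simp)
    refine ⟨0, .inl rfl, f, hfv, ?_, ?_⟩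
    · rw [hfp₀]; exact smul_mem _ _ hu₁
    · rw [hp₁q, ← hc, map_add, map_smul, map_smul, hfv, hfp₀]
      exact add_mem (smul_mem _ _ hv) (smul_mem _ _ (smul_mem _ _ hu₁))
  · obtain ⟨f, hfv, hfp₀, hfq⟩ := F.exists_isometry_apply_eq_smul_u₂_u₁ hp₀ hvq ha
      (F.pos_of_orthogonal q hvq hq) hp₀q
    have hvu₂ : B v (-u₂) = 0 := by simp [F.v_u₂]
    let N := nullRotation F.isSymm F.v_v hvu₂
    have hN (x : V) (hx : B v x = 0) : N x = x + B (-u₂) x • v :=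
      nullRotation_apply_of_orthogonal F.isSymm F.v_v hvu₂ hx
    have hNv : N v = v := by simp [hN v F.v_v, F.isSymm.eq u₂ v, F.v_u₂]
    have hNu₁ : N u₁ = u₁ := by simp [hN u₁ F.v_u₁, F.isSymm.eq u₂ u₁, F.u₁_u₂]
    have hNu₂ : N u₂ = -(v - (1 : ℝ) • u₂) := by simp [hN u₂ F.v_u₂, F.u₂_u₂, sub_eq_add_neg]
    have hu₁ : u₁ ∈ span ℝ {v - (1 : ℝ) • u₂, u₁} := subset_span (by simp)
    have hu₂ : N u₂ ∈ span ℝ {v - (1 : ℝ) • u₂, u₁} := hNu₂ ▸ neg_mem (subset_span (by simp))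
    refine ⟨1, .inr rfl, N.comp f, by simp [hfv, hNv], ?_, ?_⟩
    · rw [Isometry.comp_apply, hfp₀, map_smul]; exact smul_mem _ _ hu₂
    · rw [hp₁q, map_add, map_smul, Isometry.comp_apply, Isometry.comp_apply, hfp₀, hfq, map_smul,
        map_smul, hNu₁]
      exact add_mem (smul_mem _ _ hu₁) (smul_mem _ _ (smul_mem _ _ hu₂))

theorem exists_isometry_mem_span (F : IsNullFrame B v u₁ u₂) {p₀ p₁ : V}
    (hp₀ : B v p₀ = 0) (hp₁ : B v p₁ = 0) :
    ∃ ξ : ℝ, (ξ = 0 ∨ ξ = 1) ∧ ∃ f : B →bᵢ B, f v = v ∧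
      f p₀ ∈ span ℝ {v - ξ • u₂, u₁} ∧ f p₁ ∈ span ℝ {v - ξ • u₂, u₁} := by
  by_cases h₀ : p₀ ∈ ℝ ∙ v
  · by_cases h₁ : p₁ ∈ ℝ ∙ v
    · have hv : ℝ ∙ v ≤ span ℝ {v - (0 : ℝ) • u₂, u₁} := span_mono (by simp)
      exact ⟨0, .inl rfl, Isometry.id B, rfl, hv h₀, hv h₁⟩
    · obtain ⟨ξ, hξ, f, hfv, hf₁, hf₀⟩ := F.exists_isometry_mem_span_of_notMem hp₁ hp₀ h₁
      exact ⟨ξ, hξ, f, hfv, hf₀, hf₁⟩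
  · exact F.exists_isometry_mem_span_of_notMem hp₀ hp₁ h₀

end IsNullFrame

end NullFrame

section Minkowski

variable {n : ℕ}

abbrev minkowski (n : ℕ) : LinearMap.BilinForm ℝ (Fin n → ℝ) := Matrix.toLinearMap₂' ℝ (Inm n)

lemma minkowski_apply (x y : Fin n → ℝ) :
    minkowski n x y = ∑ i, x i * ((if (i : ℕ) < n - 1 then 1 else -1) * y i) := by
  simp [Matrix.toLinearMap₂'_apply', Inm, dotProduct, mulVec_diagonal]

lemma isSymm_minkowski : (minkowski n).IsSymm :=
  ⟨fun x y => by simp only [minkowski_apply]; exact Finset.sum_congr rfl fun i _ => by ring⟩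

lemma minkowski_single_left (i : Fin n) (x : Fin n → ℝ) :
    minkowski n (Pi.single i 1) x = (if (i : ℕ) < n - 1 then 1 else -1) * x i := by
  rw [Matrix.toLinearMap₂'_apply', single_one_dotProduct, Inm, mulVec_diagonal]

lemma minkowski_self_of_apply_last_eq_zero (hn : 0 < n) {y : Fin n → ℝ}
    (hy : y ⟨n - 1, by omega⟩ = 0) : minkowski n y y = y ⬝ᵥ y := by
  rw [minkowski_apply]
  refine Finset.sum_congr rfl fun i _ => ?_
  split_ifs with hi
  · ring
  · rw [show i = ⟨n - 1, by omega⟩ from Fin.ext (by simp only; omega), hy]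
    ring

lemma Inm_mul_self : Inm n * Inm n = 1 := by
  rw [Inm, diagonal_mul_diagonal]
  convert diagonal_one with i
  split_ifs <;> norm_num

lemma isUnit_det_of_mem_Oset {k : Matrix (Fin n) (Fin n) ℝ} (hk : k ∈ Oset n) : IsUnit k.det :=
  isUnit_det_of_left_inverse (B := Inm n * kᵀ * Inm n) <| by
    rw [mul_assoc, mul_assoc, ← mul_assoc kᵀ, hk, Inm_mul_self]

lemma inv_mem_Oset {k : Matrix (Fin n) (Fin n) ℝ} (hk : k ∈ Oset n) : k⁻¹ ∈ Oset n := by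
  have hk' := mul_nonsing_inv k (isUnit_det_of_mem_Oset hk)
  calc k⁻¹ᵀ * Inm n * k⁻¹ = k⁻¹ᵀ * (kᵀ * Inm n * k) * k⁻¹ := by rw [hk]
    _ = (k * k⁻¹)ᵀ * Inm n * (k * k⁻¹) := by simp only [transpose_mul, mul_assoc]
    _ = Inm n := by rw [hk', transpose_one, one_mul, mul_one]

lemma toMatrix'_mem_Oset (f : minkowski n →bᵢ minkowski n) :
    LinearMap.toMatrix' f.toLinearMap ∈ Oset n := by
  refine (Matrix.toLinearMap₂' ℝ (S₁ := ℝ) (S₂ := ℝ)).injective ?_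
  rw [← Matrix.toLinearMap₂'_comp, Matrix.toLin'_toMatrix']
  exact LinearMap.ext₂ f.map_app

variable (hn : 4 ≤ n)

def nullVec : Fin n → ℝ := Pi.single ⟨0, by omega⟩ 1 + Pi.single ⟨n - 1, by omega⟩ 1

lemma nullVec_apply_zero : nullVec hn ⟨0, by omega⟩ = 1 := by
  simp [nullVec, Pi.single_apply]; omega

lemma nullVec_apply_last : nullVec hn ⟨n - 1, by omega⟩ = 1 := by
  simp [nullVec, Pi.single_apply]; omega

lemma minkowski_nullVec (x : Fin n → ℝ) :
    minkowski n (nullVec hn) x = x ⟨0, by omega⟩ - x ⟨n - 1, by omega⟩ := by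
  rw [nullVec, map_add, LinearMap.add_apply, minkowski_single_left, minkowski_single_left,
    if_pos (by simp; omega), if_neg (by simp)]
  ring

lemma minkowski_nullVec_self : minkowski n (nullVec hn) (nullVec hn) = 0 := by
  rw [minkowski_nullVec, nullVec_apply_zero, nullVec_apply_last, sub_self]

lemma isNullFrame_minkowski :
    IsNullFrame (minkowski n) (nullVec hn) (Pi.single ⟨1, by omega⟩ 1)
      (Pi.single ⟨n - 2, by omega⟩ 1) where
  isSymm := isSymm_minkowski
  v_v := minkowski_nullVec_self hn
  pos_of_orthogonal x hx hxv := by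
    set y := x - x ⟨n - 1, by omega⟩ • nullVec hn
    have hyy : minkowski n y y = minkowski n x x := by
      simp [y, isSymm_minkowski.eq x (nullVec hn), hx, minkowski_nullVec_self]
    have hy_last : y ⟨n - 1, by omega⟩ = 0 := by simp [y, nullVec_apply_last]
    have hy : y ≠ 0 := fun h => hxv (mem_span_singleton.mpr ⟨_, (sub_eq_zero.mp h).symm⟩)
    rw [← hyy, minkowski_self_of_apply_last_eq_zero (by omega) hy_last]
    simpa using dotProduct_self_star_pos_iff.mpr hy
  u₁_u₁ := by rw [minkowski_single_left, if_pos (by simp; omega)]; simp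
  u₂_u₂ := by rw [minkowski_single_left, if_pos (by simp; omega)]; simp
  u₁_u₂ := by rw [minkowski_single_left, Pi.single_eq_of_ne (by simp; omega), mul_zero]
  v_u₁ := by
    rw [minkowski_nullVec, Pi.single_eq_of_ne (by simp), Pi.single_eq_of_ne (by simp; omega),
      sub_zero]
  v_u₂ := by
    rw [minkowski_nullVec, Pi.single_eq_of_ne (by simp; omega), Pi.single_eq_of_ne (by simp; omega),
      sub_zero]

lemma mulVec_apply_last_of_mem_Glam {g : Matrix (Fin n) (Fin n) ℝ} (hg : g ∈ Glam n hn 1)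
    (x : Fin n → ℝ) : (g *ᵥ x) ⟨n - 1, by omega⟩ = -minkowski n (nullVec hn) x := by
  have hrow : g ⟨n - 1, by omega⟩ = Pi.single ⟨n - 1, by omega⟩ 1 - Pi.single ⟨0, by omega⟩ 1 := by
    ext j
    rw [hg.2.2 j]
    simp [Pi.single_apply, Fin.ext_iff]
    split_ifs <;> first | omega | norm_num
  change g ⟨n - 1, by omega⟩ ⬝ᵥ x = _
  rw [hrow, sub_dotProduct, single_one_dotProduct, single_one_dotProduct, minkowski_nullVec,
    neg_sub]

lemma minkowski_nullVec_inv_mulVec {g : Matrix (Fin n) (Fin n) ℝ} (hg : g ∈ Glam n hn 1)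
    (x : Fin n → ℝ) : minkowski n (nullVec hn) (g⁻¹ *ᵥ x) = -x ⟨n - 1, by omega⟩ := by
  have h := mulVec_apply_last_of_mem_Glam hn hg (g⁻¹ *ᵥ x)
  rw [mulVec_mulVec, mul_nonsing_inv g hg.1, one_mulVec] at h
  linarith

def normalForm (ξ : ℝ) : Matrix (Fin n) (Fin n) ℝ :=
  1 + Matrix.single ⟨n - 2, by omega⟩ ⟨0, by omega⟩ ξ
    + Matrix.single ⟨n - 1, by omega⟩ ⟨0, by omega⟩ (-1)

lemma normalForm_eq_transvection_mul_transvection (ξ : ℝ) :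
    normalForm hn ξ = transvection ⟨n - 2, by omega⟩ ⟨0, by omega⟩ ξ
      * transvection ⟨n - 1, by omega⟩ ⟨0, by omega⟩ (-1) := by
  have h : (⟨0, by omega⟩ : Fin n) ≠ ⟨n - 1, by omega⟩ := by simp; omega
  rw [normalForm, transvection, transvection, add_mul, mul_add, mul_add, one_mul, one_mul, mul_one,
    single_mul_single_of_ne _ _ _ _ h, add_zero]
  abel

lemma isUnit_det_normalForm (ξ : ℝ) : IsUnit (normalForm hn ξ).det := by
  rw [normalForm_eq_transvection_mul_transvection, det_mul,
    det_transvection_of_ne _ _ (by simp; omega), det_transvection_of_ne _ _ (by simp; omega),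
    one_mul]
  exact isUnit_one

lemma normalForm_mulVec (ξ : ℝ) (x : Fin n → ℝ) :
    normalForm hn ξ *ᵥ x =
      x + x ⟨0, by omega⟩ •
        (ξ • Pi.single ⟨n - 2, by omega⟩ 1 - Pi.single ⟨n - 1, by omega⟩ 1) := by
  rw [normalForm, add_mulVec, add_mulVec, one_mulVec, single_mulVec_eq, single_mulVec_eq]
  module

lemma normalForm_mulVec_apply_last (ξ : ℝ) (x : Fin n → ℝ) :
    (normalForm hn ξ *ᵥ x) ⟨n - 1, by omega⟩ = -minkowski n (nullVec hn) x := by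
  rw [normalForm_mulVec, minkowski_nullVec]
  simp [Pi.single_apply]
  rw [if_neg (by omega)]
  ring

lemma normalForm_mulVec_mem_span (ξ : ℝ) {x : Fin n → ℝ}
    (hx : x ∈ span ℝ {nullVec hn - ξ • Pi.single ⟨n - 2, by omega⟩ 1, Pi.single ⟨1, by omega⟩ 1}) :
    normalForm hn ξ *ᵥ x ∈ span ℝ {Pi.single ⟨0, by omega⟩ 1, Pi.single ⟨1, by omega⟩ 1} := by
  have hw : normalForm hn ξ *ᵥ (nullVec hn - ξ • Pi.single ⟨n - 2, by omega⟩ 1) =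
      Pi.single ⟨0, by omega⟩ 1 := by
    rw [normalForm_mulVec, Pi.sub_apply, Pi.smul_apply, nullVec_apply_zero,
      Pi.single_eq_of_ne (by simp; omega), smul_zero, sub_zero, one_smul, nullVec]
    abel
  have he : normalForm hn ξ *ᵥ Pi.single ⟨1, by omega⟩ 1 = Pi.single ⟨1, by omega⟩ 1 := by
    rw [normalForm_mulVec, Pi.single_eq_of_ne (by simp), zero_smul, add_zero]
  obtain ⟨a, b, rfl⟩ := mem_span_pair.mp hx
  rw [mulVec_add, mulVec_smul, mulVec_smul, hw, he]
  exact mem_span_pair.mpr ⟨a, b, rfl⟩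

lemma mem_Hset'_of_mulVec_single {M : Matrix (Fin n) (Fin n) ℝ} (hdet : IsUnit M.det)
    (hcol : ∀ i : Fin n, (i : ℕ) < 2 →
      M *ᵥ Pi.single i 1 ∈ span ℝ {Pi.single ⟨0, by omega⟩ 1, Pi.single ⟨1, by omega⟩ 1})
    (hlast : ∀ i : Fin n, (i : ℕ) < n - 1 → (M *ᵥ Pi.single i 1) ⟨n - 1, by omega⟩ = 0) :
    M ∈ Hset' n := by
  refine ⟨by rwa [det_transpose], fun i j hij => ?_⟩
  rw [transpose_apply, show M j i = (M *ᵥ Pi.single i 1) j by simp]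
  rcases hij with ⟨hi, hj⟩ | ⟨hi, hj⟩
  · obtain ⟨a, b, hab⟩ := mem_span_pair.mp (hcol i hi)
    rw [← hab]
    simp only [Pi.add_apply, Pi.smul_apply, Pi.single_apply, Fin.ext_iff]
    rw [if_neg (by omega), if_neg (by omega), smul_zero, smul_zero, add_zero]
  · rw [show j = ⟨n - 1, by omega⟩ from Fin.ext hj]
    exact hlast i hi

end Minkowski

/-- every `g ∈ G₁` can be moved by `H'` and `O(n-1,1)` to the matrix
equal to the identity except that its `(n-1,1)` entry is `ξ ∈ {0,1}` and its
`(n,1)` entry is `-1`. -/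
theorem stmt6 (n : ℕ) (hn : 4 ≤ n) (g : Matrix (Fin n) (Fin n) ℝ)
    (hg : g ∈ Glam n hn 1) :
    ∃ xi : ℝ, (xi = 0 ∨ xi = 1) ∧ ∃ h ∈ Hset' n, ∃ k ∈ Oset n,
      h * g * k = 1 + Matrix.single ⟨n - 2, by omega⟩ ⟨0, by omega⟩ xi
        + Matrix.single ⟨n - 1, by omega⟩ ⟨0, by omega⟩ (-1) := by
  have hp (i : Fin n) (hi : (i : ℕ) < n - 1) :
      minkowski n (nullVec hn) (g⁻¹ *ᵥ Pi.single i 1) = 0 := by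
    rw [minkowski_nullVec_inv_mulVec hn hg, Pi.single_eq_of_ne (by simp [Fin.ext_iff]; omega),
      neg_zero]
  obtain ⟨ξ, hξ, f, hfv, hf₀, hf₁⟩ := (isNullFrame_minkowski hn).exists_isometry_mem_span
    (hp ⟨0, by omega⟩ (by simp; omega)) (hp ⟨1, by omega⟩ (by simp; omega))
  set K := LinearMap.toMatrix' f.toLinearMap
  have hK : K ∈ Oset n := toMatrix'_mem_Oset f
  have hKx (x : Fin n → ℝ) : K *ᵥ x = f x := LinearMap.toMatrix'_mulVec _ x
  refine ⟨ξ, hξ, normalForm hn ξ * K * g⁻¹, mem_Hset'_of_mulVec_single hn ?_ ?_ ?_,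
    K⁻¹, inv_mem_Oset hK, ?_⟩
  · rw [det_mul, det_mul]
    exact ((isUnit_det_normalForm hn ξ).mul (isUnit_det_of_mem_Oset hK)).mul
      (isUnit_nonsing_inv_det g hg.1)
  · rintro ⟨_ | _ | i, _⟩ hi
    · rw [← mulVec_mulVec, ← mulVec_mulVec, hKx]; exact normalForm_mulVec_mem_span hn ξ hf₀
    · rw [← mulVec_mulVec, ← mulVec_mulVec, hKx]; exact normalForm_mulVec_mem_span hn ξ hf₁
    · simp at hi
  · intro i hi
    rw [← mulVec_mulVec, ← mulVec_mulVec, hKx, normalForm_mulVec_apply_last, ← hfv,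
      Isometry.map_app, hp i hi, neg_zero]
  · rw [mul_assoc _ g⁻¹ g, nonsing_inv_mul g hg.1, mul_one, mul_assoc,
      mul_nonsing_inv _ (isUnit_det_of_mem_Oset hK), mul_one]
    rfl
end
end

section
/- Let n ≥ 4, λ, ξ ∈ ℝ, and let ∇ be any bilinear map 𝔤 × 𝔤 → 𝔤 satisfying the Koszul formula for ⟨·,·⟩_{λ,ξ}. Writing x_i := x'_i = g_{λ,ξ}e_i, the following hold: ∇_{x₁}x₁ = λx₂; ∇_{x₁}x₂ = −λx₁ − (λξ/2)x_{n−1} + ((λ²+1)/2)xₙ; ∇_{x₁}x_{n−1} = (λξ/2)x₂; ∇_{x₁}xₙ = ((λ²+1)/2)x₂; ∇_{x₂}x₁ = −(λξ/2)x_{n−1} + ((λ²−1)/2)xₙ; ∇_{x₂}x₂ = 0; ∇_{x₂}x_{n−1} = (ξ/2)(λx₁ − xₙ); ∇_{x₂}xₙ = ((λ²−1)/2)x₁ − (ξ/2)x_{n−1}; ∇_{x_{n−1}}x₁ = (λξ/2)x₂; ∇_{x_{n−1}}x₂ = −(ξ/2)(λx₁ − xₙ); ∇_{x_{n−1}}x_{n−1}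 = 0; ∇_{x_{n−1}}xₙ = (ξ/2)x₂; ∇_{xₙ}x₁ = ((λ²+1)/2)x₂; ∇_{xₙ}x₂ = −((λ²+1)/2)x₁ − (ξ/2)x_{n−1} + λxₙ; ∇_{xₙ}x_{n−1} = (ξ/2)x₂; ∇_{xₙ}xₙ = λx₂; and ∇_{x_i}x_j = 0 whenever 3 ≤ i ≤ n−2 or 3 ≤ j ≤ n−2. -/
open Matrix

noncomputable section

/-!
The bracket has rank one: `[X, Y] = ω(X, Y) eₙ` with `ω(X, Y) = X₁Y₂ - X₂Y₁`. For such a bracket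
the Koszul formula can be solved in closed form: if `a` and `b` represent the functionals
`X ↦ X₁` and `X ↦ X₂` and `ζ = ⟨eₙ, ·⟩`, then
`2∇_X Y = ω(X, Y) eₙ + (Y₂ ζ X + X₂ ζ Y) a - (Y₁ ζ X + X₁ ζ Y) b`.
For `⟨·,·⟩_{λ,ξ}` one has `a = x₁ + ξ x_{n-1} - λ xₙ`, `b = x₂` and `eₙ = xₙ - λ x₁`, and the
table follows by evaluating the coordinates and `ζ` on the basis `x_i`.
-/

theorem LinearMap.SeparatingLeft.eq_of_koszul_of_bracket_eq_smul {K V : Type*} [Field K]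
    [NeZero (2 : K)] [AddCommGroup V] [Module K V] {B : LinearMap.BilinForm K V}
    (hB : B.SeparatingLeft) {bracket nabla : V → V → V} {α β : V → K} {a b z : V}
    (ha : ∀ w, B a w = α w) (hb : ∀ w, B b w = β w)
    (hbr : ∀ X Y, bracket X Y = (α X * β Y - β X * α Y) • z)
    (hK : ∀ X Y W, 2 * B (nabla X Y) W
      = B (bracket X Y) W - B (bracket Y W) X + B (bracket W X) Y) (X Y : V) :
    nabla X Y = (2⁻¹ : K) • ((α X * β Y - β X * α Y) • z
      + (β Y * B z X + β X * B z Y) • a - (α Y * B z X + α X * B z Y) • b) := by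
  rw [← sub_eq_zero]
  refine hB _ fun W => ?_
  have hKW := hK X Y W
  simp only [hbr, map_smul, LinearMap.smul_apply, smul_eq_mul] at hKW
  simp only [map_sub, map_add, map_smul, LinearMap.sub_apply, LinearMap.add_apply,
    LinearMap.smul_apply, smul_eq_mul, ha, hb]
  field_simp
  linear_combination hKW

lemma ip0_comm (n : ℕ) (x y : Fin n → ℝ) : ip0 n x y = ip0 n y x := by
  simp only [ip0, mul_right_comm]

lemma ip0_single_one (n : ℕ) (x : Fin n → ℝ) (j : Fin n) :
    ip0 n x (Pi.single j 1) = eps n j * x j := by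
  simp [ip0, Pi.single_apply]

section

variable (n : ℕ) (hn : 4 ≤ n) (lam xi : ℝ)

lemma gmat_mul_gmat (lam' xi' : ℝ) :
    gmat n hn lam xi * gmat n hn lam' xi' = gmat n hn (lam + lam') (xi + xi') := by
  have h2 : (⟨n - 2, by omega⟩ : Fin n) ≠ ⟨0, by omega⟩ := Fin.ne_of_val_ne (by dsimp only; omega)
  have h1 : (⟨n - 1, by omega⟩ : Fin n) ≠ ⟨0, by omega⟩ := Fin.ne_of_val_ne (by dsimp only; omega)
  simp only [gmat, add_mul, mul_add, one_mul, mul_one, Matrix.single_mul_single_of_ne _ _ _ _ h1,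
    Matrix.single_mul_single_of_ne _ _ _ _ h2, add_zero, Matrix.single_add]
  abel

lemma gmat_zero : gmat n hn 0 0 = 1 := by
  simp [gmat]

lemma gmat_inv : (gmat n hn lam xi)⁻¹ = gmat n hn (-lam) (-xi) :=
  Matrix.inv_eq_right_inv (by simp [gmat_mul_gmat, gmat_zero])

lemma gmat_mulVec_apply (v : Fin n → ℝ) (k : Fin n) :
    (gmat n hn lam xi *ᵥ v) k
      = v k + if (k : ℕ) = 0 then xi * v ⟨n - 2, by omega⟩ + lam * v ⟨n - 1, by omega⟩ else 0 := by
  simp only [gmat, Matrix.add_mulVec, Matrix.one_mulVec, Matrix.single_mulVec, Pi.add_apply,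
    Function.update_apply, Fin.ext_iff, Pi.zero_apply]
  split_ifs <;> ring

lemma gmat_inv_mulVec_xvec (i : Fin n) :
    (gmat n hn lam xi)⁻¹ *ᵥ xvec n hn lam xi i = Pi.single i 1 := by
  rw [xvec, Matrix.mulVec_mulVec, gmat_inv, gmat_mul_gmat, neg_add_cancel, neg_add_cancel,
    gmat_zero, Matrix.one_mulVec]

lemma xvec_apply (i k : Fin n) :
    xvec n hn lam xi i k = (if k = i then 1 else 0)
      + if (k : ℕ) = 0 then
          (if (i : ℕ) = n - 2 then xi else 0) + (if (i : ℕ) = n - 1 then lam else 0)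
        else 0 := by
  simp [xvec, gmat_mulVec_apply, Pi.single_apply, Fin.ext_iff, eq_comm]

lemma xvec_apply_zero (i : Fin n) :
    xvec n hn lam xi i ⟨0, by omega⟩
      = (if (i : ℕ) = 0 then 1 else 0) + (if (i : ℕ) = n - 2 then xi else 0)
        + (if (i : ℕ) = n - 1 then lam else 0) := by
  simp (disch := omega) only [xvec_apply, Fin.ext_iff, eq_comm (a := (0 : ℕ)), if_true]
  ring

lemma xvec_apply_one (i : Fin n) :
    xvec n hn lam xi i ⟨1, by omega⟩ = if (i : ℕ) = 1 then 1 else 0 := by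
  simp (disch := omega) only [xvec_apply, Fin.ext_iff, eq_comm (a := (1 : ℕ)), if_neg, add_zero]

lemma single_last_eq_xvec :
    (Pi.single ⟨n - 1, by omega⟩ 1 : Fin n → ℝ)
      = xvec n hn lam xi ⟨n - 1, by omega⟩ - lam • xvec n hn lam xi ⟨0, by omega⟩ := by
  funext k
  simp (disch := omega) only [Pi.sub_apply, Pi.smul_apply, smul_eq_mul, xvec_apply,
    Pi.single_apply, Fin.ext_iff, if_neg, if_true]
  split_ifs <;> ring

lemma ipg_comm (u v : Fin n → ℝ) : ipg n hn lam xi u v = ipg n hn lam xi v u :=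
  ip0_comm n _ _

lemma ipg_xvec (u : Fin n → ℝ) (j : Fin n) :
    ipg n hn lam xi u (xvec n hn lam xi j) = eps n j * ((gmat n hn lam xi)⁻¹ *ᵥ u) j := by
  rw [ipg, gmat_inv_mulVec_xvec, ip0_single_one]

def ipgForm : LinearMap.BilinForm ℝ (Fin n → ℝ) :=
  (Matrix.toBilin' (Inm n)).compl₁₂ (Matrix.toLin' (gmat n hn lam xi)⁻¹)
    (Matrix.toLin' (gmat n hn lam xi)⁻¹)

lemma ipgForm_apply (u v : Fin n → ℝ) : ipgForm n hn lam xi u v = ipg n hn lam xi u v := by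
  simp [ipgForm, ipg, ip0, Inm, eps, Matrix.toBilin'_apply', dotProduct, Matrix.mulVec_diagonal]

lemma ipgForm_separatingLeft : (ipgForm n hn lam xi).SeparatingLeft := by
  intro u hu
  have hcoord : (gmat n hn lam xi)⁻¹ *ᵥ u = 0 := funext fun j => by
    have := hu (xvec n hn lam xi j)
    rw [ipgForm_apply, ipg_xvec] at this
    exact (mul_eq_zero.1 this).resolve_left (by unfold eps; split_ifs <;> norm_num)
  have hinv : gmat n hn lam xi * (gmat n hn lam xi)⁻¹ = 1 := by
    rw [gmat_inv, gmat_mul_gmat, add_neg_cancel, add_neg_cancel, gmat_zero]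
  rw [← Matrix.one_mulVec u, ← hinv, ← Matrix.mulVec_mulVec, hcoord, Matrix.mulVec_zero]

lemma ipg_single_last_xvec (j : Fin n) :
    ipg n hn lam xi (Pi.single ⟨n - 1, by omega⟩ 1) (xvec n hn lam xi j)
      = -(if (j : ℕ) = n - 1 then 1 else 0) - lam * (if (j : ℕ) = 0 then 1 else 0) := by
  simp (disch := omega) only [ipg_xvec, gmat_inv, gmat_mulVec_apply, Pi.single_apply, eps,
    Fin.ext_iff, if_neg, if_true]
  split_ifs <;> first | omega | ring

lemma ipg_dual_apply_zero (w : Fin n → ℝ) :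
    ipg n hn lam xi (xvec n hn lam xi ⟨0, by omega⟩ + xi • xvec n hn lam xi ⟨n - 2, by omega⟩
      - lam • xvec n hn lam xi ⟨n - 1, by omega⟩) w = w ⟨0, by omega⟩ := by
  simp only [← ipgForm_apply, map_add, map_sub, map_smul, LinearMap.add_apply,
    LinearMap.sub_apply, LinearMap.smul_apply, smul_eq_mul]
  simp (disch := omega) only [ipgForm_apply, ipg_comm _ _ _ _ _ w, ipg_xvec, gmat_inv,
    gmat_mulVec_apply, eps, if_pos, if_neg, if_true]
  ring

lemma ipg_xvec_one_left (w : Fin n → ℝ) :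
    ipg n hn lam xi (xvec n hn lam xi ⟨1, by omega⟩) w = w ⟨1, by omega⟩ := by
  simp (disch := omega) only [ipg_comm _ _ _ _ _ w, ipg_xvec, gmat_inv, gmat_mulVec_apply, eps,
    if_pos, if_neg]
  ring

lemma eq_of_koszul_ipg (nab : (Fin n → ℝ) → (Fin n → ℝ) → Fin n → ℝ)
    (hK : ∀ X Y Z : Fin n → ℝ,
      2 * ipg n hn lam xi (nab X Y) Z
        = ipg n hn lam xi (bral n hn X Y) Z - ipg n hn lam xi (bral n hn Y Z) X
          + ipg n hn lam xi (bral n hn Z X) Y) (X Y : Fin n → ℝ) :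
    nab X Y = (2⁻¹ : ℝ) •
      ((X ⟨0, by omega⟩ * Y ⟨1, by omega⟩ - X ⟨1, by omega⟩ * Y ⟨0, by omega⟩)
          • Pi.single ⟨n - 1, by omega⟩ 1
        + (Y ⟨1, by omega⟩ * ipg n hn lam xi (Pi.single ⟨n - 1, by omega⟩ 1) X
            + X ⟨1, by omega⟩ * ipg n hn lam xi (Pi.single ⟨n - 1, by omega⟩ 1) Y)
          • (xvec n hn lam xi ⟨0, by omega⟩ + xi • xvec n hn lam xi ⟨n - 2, by omega⟩
            - lam • xvec n hn lam xi ⟨n - 1, by omega⟩)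
        - (Y ⟨0, by omega⟩ * ipg n hn lam xi (Pi.single ⟨n - 1, by omega⟩ 1) X
            + X ⟨0, by omega⟩ * ipg n hn lam xi (Pi.single ⟨n - 1, by omega⟩ 1) Y)
          • xvec n hn lam xi ⟨1, by omega⟩) := by
  simpa only [ipgForm_apply] using
    (ipgForm_separatingLeft n hn lam xi).eq_of_koszul_of_bracket_eq_smul
      (bracket := bral n hn) (nabla := nab)
      (fun w => (ipgForm_apply ..).trans (ipg_dual_apply_zero n hn lam xi w))
      (fun w => (ipgForm_apply ..).trans (ipg_xvec_one_left n hn lam xi w))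
      (fun _ _ => rfl) (by simpa only [ipgForm_apply] using hK) X Y

end

/-- the values of the Levi-Civita connection (any bilinear map satisfying
the Koszul formula for `⟨·,·⟩_{λ,ξ}`) on the pseudo-orthonormal basis `x_i = g_{λ,ξ}e_i`. -/
theorem stmt14 (n : ℕ) (hn : 4 ≤ n) (lam xi : ℝ)
    (nab : (Fin n → ℝ) →ₗ[ℝ] (Fin n → ℝ) →ₗ[ℝ] (Fin n → ℝ))
    (hK : ∀ X Y Z : Fin n → ℝ,
      2 * ipg n hn lam xi (nab X Y) Z
        = ipg n hn lam xi (bral n hn X Y) Z - ipg n hn lam xi (bral n hn Y Z) X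
          + ipg n hn lam xi (bral n hn Z X) Y) :
    nab (xvec n hn lam xi ⟨0, by omega⟩) (xvec n hn lam xi ⟨0, by omega⟩) = lam • (xvec n hn lam xi ⟨1, by omega⟩) ∧
    nab (xvec n hn lam xi ⟨0, by omega⟩) (xvec n hn lam xi ⟨1, by omega⟩) = (-lam) • (xvec n hn lam xi ⟨0, by omega⟩) + (-(lam * xi / 2)) • (xvec n hn lam xi ⟨n - 2, by omega⟩) + ((lam ^ 2 + 1) / 2) • (xvec n hn lam xi ⟨n - 1, by omega⟩) ∧
    nab (xvec n hn lam xi ⟨0, by omega⟩) (xvec n hn lam xi ⟨n - 2, by omega⟩) = (lam * xi / 2) • (xvec n hn lam xi ⟨1, by omega⟩) ∧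
    nab (xvec n hn lam xi ⟨0, by omega⟩) (xvec n hn lam xi ⟨n - 1, by omega⟩) = ((lam ^ 2 + 1) / 2) • (xvec n hn lam xi ⟨1, by omega⟩) ∧
    nab (xvec n hn lam xi ⟨1, by omega⟩) (xvec n hn lam xi ⟨0, by omega⟩) = (-(lam * xi / 2)) • (xvec n hn lam xi ⟨n - 2, by omega⟩) + ((lam ^ 2 - 1) / 2) • (xvec n hn lam xi ⟨n - 1, by omega⟩) ∧
    nab (xvec n hn lam xi ⟨1, by omega⟩) (xvec n hn lam xi ⟨1, by omega⟩) = 0 ∧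
    nab (xvec n hn lam xi ⟨1, by omega⟩) (xvec n hn lam xi ⟨n - 2, by omega⟩) = (xi / 2) • (lam • (xvec n hn lam xi ⟨0, by omega⟩) - (xvec n hn lam xi ⟨n - 1, by omega⟩)) ∧
    nab (xvec n hn lam xi ⟨1, by omega⟩) (xvec n hn lam xi ⟨n - 1, by omega⟩) = ((lam ^ 2 - 1) / 2) • (xvec n hn lam xi ⟨0, by omega⟩) + (-(xi / 2)) • (xvec n hn lam xi ⟨n - 2, by omega⟩) ∧
    nab (xvec n hn lam xi ⟨n - 2, by omega⟩) (xvec n hn lam xi ⟨0, by omega⟩) = (lam * xi / 2) • (xvec n hn lam xi ⟨1, by omega⟩) ∧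
    nab (xvec n hn lam xi ⟨n - 2, by omega⟩) (xvec n hn lam xi ⟨1, by omega⟩) = -((xi / 2) • (lam • (xvec n hn lam xi ⟨0, by omega⟩) - (xvec n hn lam xi ⟨n - 1, by omega⟩))) ∧
    nab (xvec n hn lam xi ⟨n - 2, by omega⟩) (xvec n hn lam xi ⟨n - 2, by omega⟩) = 0 ∧
    nab (xvec n hn lam xi ⟨n - 2, by omega⟩) (xvec n hn lam xi ⟨n - 1, by omega⟩) = (xi / 2) • (xvec n hn lam xi ⟨1, by omega⟩) ∧
    nab (xvec n hn lam xi ⟨n - 1, by omega⟩) (xvec n hn lam xi ⟨0, by omega⟩) = ((lam ^ 2 + 1) / 2) • (xvec n hn lam xi ⟨1, by omega⟩) ∧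
    nab (xvec n hn lam xi ⟨n - 1, by omega⟩) (xvec n hn lam xi ⟨1, by omega⟩) = (-((lam ^ 2 + 1) / 2)) • (xvec n hn lam xi ⟨0, by omega⟩) + (-(xi / 2)) • (xvec n hn lam xi ⟨n - 2, by omega⟩) + lam • (xvec n hn lam xi ⟨n - 1, by omega⟩) ∧
    nab (xvec n hn lam xi ⟨n - 1, by omega⟩) (xvec n hn lam xi ⟨n - 2, by omega⟩) = (xi / 2) • (xvec n hn lam xi ⟨1, by omega⟩) ∧
    nab (xvec n hn lam xi ⟨n - 1, by omega⟩) (xvec n hn lam xi ⟨n - 1, by omega⟩) = lam • (xvec n hn lam xi ⟨1, by omega⟩) ∧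
    (∀ i j : Fin n, (2 ≤ (i : ℕ) ∧ (i : ℕ) ≤ n - 3) ∨ (2 ≤ (j : ℕ) ∧ (j : ℕ) ≤ n - 3) →
      nab (xvec n hn lam xi i) (xvec n hn lam xi j) = 0) := by
  have hnab := eq_of_koszul_ipg n hn lam xi (nab · ·) hK
  refine ⟨?_, ?_, ?_, ?_, ?_, ?_, ?_, ?_, ?_, ?_, ?_, ?_, ?_, ?_, ?_, ?_, fun i j hij => ?_⟩
  on_goal 17 => rcases hij with hij | hij
  all_goals
    rw [hnab]
    simp (disch := omega) only [xvec_apply_zero, xvec_apply_one, ipg_single_last_xvec,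
      if_neg, if_true]
    rw [single_last_eq_xvec n hn lam xi]
    module
end
end
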